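/- Let h : ℝ³ → ℂ be continuous, L > 0, and let χ_I : ℝ³ → ℂ be measurable with ∫_{ℝ³} (1 + ‖x‖)·|χ_I(x)| dx < ∞. Then lim_{V→∞} ∫_{ℝ³} |χ_I(x)|·‖(h_x)_L − (h_x)_{L,V}‖₂ dx = 0. -/

import Mathlib

/-!
The lattice point `q_V(k)` lies within `√3·π/V` of `k`, so `q_V → id` uniformly. On the compact
cube `I_L` the function `h` is bounded and uniformly continuous, and the phase `e^{i⟨k,x⟩}` is
`‖x‖`-Lipschitz in `k`; hence for `V` large `|(h_x)_L − (h_x)_{L,V}| ≤ ε(1 + ‖x‖)` on `I_L`,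
uniformly in `x`. The integrand is then at most `ε·|I_L|^{1/2}·(1 + ‖x‖)|χ_I(x)|`, whose integral
is finite by hypothesis.
-/

open MeasureTheory
open scoped RealInnerProductSpace

/-- The nearest lattice point `q_V(k)` of the momentum lattice `Γ_V`, defined
componentwise by `q_V(k)_j = (2π/V)·⌊V·k_j/(2π) + 1/2⌋`. -/
noncomputable def qV (V : ℝ) (k : EuclideanSpace ℝ (Fin 3)) :
    EuclideanSpace ℝ (Fin 3) :=
  WithLp.toLp 2 fun j => (2 * Real.pi / V) * (⌊V * k j / (2 * Real.pi) + 1 / 2⌋ : ℤ)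

/-- The cube `I_L = [−L,L]³ ⊂ ℝ³`. -/
def cubeI (L : ℝ) : Set (EuclideanSpace ℝ (Fin 3)) :=
  {k | ∀ j, k j ∈ Set.Icc (-L) L}

/-- The cutoff one-particle function `(h_x)_L(k) = h(k)·e^{i⟨k,x⟩}·χ_{I_L}(k)`. -/
noncomputable def hxL (h : EuclideanSpace ℝ (Fin 3) → ℂ) (L : ℝ)
    (x : EuclideanSpace ℝ (Fin 3)) : EuclideanSpace ℝ (Fin 3) → ℂ :=
  (cubeI L).indicator fun k => h k * Complex.exp (Complex.I * (⟪k, x⟫ : ℝ))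

/-- The lattice approximation
`(h_x)_{L,V}(k) = h(q_V(k))·e^{i⟨q_V(k),x⟩}·χ_{I_L}(k)`. -/
noncomputable def hxLV (h : EuclideanSpace ℝ (Fin 3) → ℂ) (L V : ℝ)
    (x : EuclideanSpace ℝ (Fin 3)) : EuclideanSpace ℝ (Fin 3) → ℂ :=
  (cubeI L).indicator fun k =>
    h (qV V k) * Complex.exp (Complex.I * (⟪qV V k, x⟫ : ℝ))

open Filter Topology
open scoped NNReal ENNReal

lemma abs_mul_round_div_sub_le {a : ℝ} (ha : 0 < a) (t : ℝ) :
    |a * round (t / a) - t| ≤ a / 2 := by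
  have hsplit : a * round (t / a) - t = a * (round (t / a) - t / a) := by field_simp
  rw [hsplit, abs_mul, abs_of_pos ha, abs_sub_comm]
  nlinarith [abs_sub_round (t / a)]

lemma norm_exp_I_mul_sub_exp_I_mul_le (a b : ℝ) :
    ‖Complex.exp (Complex.I * a) - Complex.exp (Complex.I * b)‖ ≤ |a - b| := by
  have hfactor : Complex.exp (Complex.I * a) - Complex.exp (Complex.I * b)
      = Complex.exp (Complex.I * b) * (Complex.exp (Complex.I * (a - b : ℝ)) - 1) := by
    rw [mul_sub, ← Complex.exp_add]
    push_cast
    ring_nf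
  rw [hfactor, norm_mul, Complex.norm_exp_I_mul_ofReal, one_mul, ← Real.norm_eq_abs]
  exact Real.norm_exp_I_mul_ofReal_sub_one_le

theorem tendsto_integral_of_forall_eventually_le_mul {α ι : Type*} [MeasurableSpace α]
    {μ : Measure α} {l : Filter ι} {F : ι → α → ℝ} {g : α → ℝ} (hF : ∀ i x, 0 ≤ F i x)
    (hg : Integrable g μ) (hFg : ∀ ε > 0, ∀ᶠ i in l, ∀ x, F i x ≤ ε * g x) :
    Tendsto (fun i => ∫ x, F i x ∂μ) l (𝓝 0) := by
  refine tendsto_order.2 ⟨fun a ha => .of_forall fun i => ha.trans_le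
    (integral_nonneg (hF i)), fun a ha => ?_⟩
  have hε : 0 < a / (|∫ x, g x ∂μ| + 1) := by positivity
  filter_upwards [hFg _ hε] with i hi
  calc ∫ x, F i x ∂μ ≤ ∫ x, a / (|∫ x, g x ∂μ| + 1) * g x ∂μ :=
        integral_mono_of_nonneg (.of_forall (hF i)) (hg.const_mul _) (.of_forall hi)
    _ = a / (|∫ x, g x ∂μ| + 1) * ∫ x, g x ∂μ := integral_const_mul _ _
    _ < a := by
      rw [div_mul_eq_mul_div, div_lt_iff₀ (by positivity)]
      nlinarith [le_abs_self (∫ x, g x ∂μ)]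

section Modulate

variable {E : Type*} [NormedAddCommGroup E] [InnerProductSpace ℝ E]

/-- The paper's `h_x`. -/
noncomputable def modulate (h : E → ℂ) (x k : E) : ℂ :=
  h k * Complex.exp (Complex.I * (⟪k, x⟫ : ℝ))

lemma dist_modulate_le (h : E → ℂ) (x k y : E) :
    dist (modulate h x k) (modulate h x y) ≤ dist (h k) (h y) + ‖h k‖ * (dist k y * ‖x‖) := by
  have hsplit : modulate h x k - modulate h x y
      = h k * (Complex.exp (Complex.I * (⟪k, x⟫ : ℝ)) - Complex.exp (Complex.I * (⟪y, x⟫ : ℝ)))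
        + (h k - h y) * Complex.exp (Complex.I * (⟪y, x⟫ : ℝ)) := by
    simp only [modulate]
    ring
  have hphase : ‖Complex.exp (Complex.I * (⟪k, x⟫ : ℝ))
      - Complex.exp (Complex.I * (⟪y, x⟫ : ℝ))‖ ≤ dist k y * ‖x‖ := by
    refine (norm_exp_I_mul_sub_exp_I_mul_le _ _).trans ?_
    rw [← inner_sub_left, dist_eq_norm]
    exact abs_real_inner_le_norm _ _
  rw [dist_eq_norm, hsplit, dist_eq_norm]
  refine (norm_add_le _ _).trans ?_
  rw [norm_mul, norm_mul, Complex.norm_exp_I_mul_ofReal, mul_one, add_comm]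
  gcongr

theorem TendstoUniformlyOn.eventually_dist_modulate_le {ι : Type*} {l : Filter ι}
    {q : ι → E → E} {S : Set E} (hq : TendstoUniformlyOn q id l S) (hS : IsCompact S)
    {h : E → ℂ} (hh : Continuous h) {ε : ℝ} (hε : 0 < ε) :
    ∀ᶠ i in l, ∀ x, ∀ k ∈ S, dist (modulate h x k) (modulate h x (q i k)) ≤ ε * (1 + ‖x‖) := by
  obtain ⟨M, hM⟩ := hS.exists_bound_of_continuousOn hh.continuousOn
  obtain ⟨δ, hδ, hhδ⟩ := Metric.mem_uniformity_dist.1 <|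
    hS.uniformContinuousAt_of_continuousAt h (fun _ _ => hh.continuousAt)
      (Metric.dist_mem_uniformity hε)
  have hM' : 0 ≤ max M 0 := le_max_right _ _
  filter_upwards [Metric.tendstoUniformlyOn_iff.1 hq (min δ (ε / (max M 0 + 1)))
    (by positivity)] with i hi x k hk
  have hqk := hi k hk
  have hhk : dist (h k) (h (q i k)) < ε := hhδ (hqk.trans_le (min_le_left _ _)) hk
  have hMk : ‖h k‖ ≤ max M 0 := (hM k hk).trans (le_max_left _ _)
  have hdist : ‖h k‖ * dist k (q i k) ≤ ε := calc
    ‖h k‖ * dist k (q i k) ≤ max M 0 * (ε / (max M 0 + 1)) :=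
      mul_le_mul hMk (hqk.le.trans (min_le_right _ _)) dist_nonneg hM'
    _ ≤ ε := by
      rw [mul_div_assoc', div_le_iff₀ (by positivity)]
      nlinarith
  calc dist (modulate h x k) (modulate h x (q i k))
      ≤ dist (h k) (h (q i k)) + ‖h k‖ * (dist k (q i k) * ‖x‖) := dist_modulate_le h x k _
    _ ≤ ε + ε * ‖x‖ := by
      rw [← mul_assoc]
      exact add_le_add hhk.le (by gcongr)
    _ = ε * (1 + ‖x‖) := by ring

end Modulate

lemma qV_apply (V : ℝ) (k : EuclideanSpace ℝ (Fin 3)) (j : Fin 3) :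
    qV V k j = 2 * Real.pi / V * round (k j / (2 * Real.pi / V)) := by
  rw [qV, PiLp.toLp_apply, round_eq, div_div_eq_mul_div, mul_comm (k j)]

lemma dist_qV_le {V : ℝ} (hV : 0 < V) (k : EuclideanSpace ℝ (Fin 3)) :
    dist (qV V k) k ≤ √3 * (Real.pi / V) := by
  have hcard : (((Fintype.card (Fin 3) : ℝ≥0) ^ (1 / (2 : ℝ≥0∞)).toReal : ℝ≥0) : ℝ) = √3 := by
    simp [Real.sqrt_eq_rpow]
  refine (PiLp.antilipschitzWith_ofLp 2 _).le_mul_dist _ _ |>.trans ?_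
  rw [hcard]
  gcongr
  refine dist_pi_le_iff (by positivity) |>.2 fun j => ?_
  rw [Real.dist_eq, qV_apply]
  convert abs_mul_round_div_sub_le (a := 2 * Real.pi / V) (by positivity) (k j) using 1
  ring

theorem tendstoUniformly_qV : TendstoUniformly qV id atTop := by
  refine Metric.tendstoUniformly_iff.2 fun ε hε => ?_
  have hlim : Tendsto (fun V : ℝ => √3 * (Real.pi / V)) atTop (𝓝 0) := by
    simpa using (tendsto_const_nhds.div_atTop tendsto_id).const_mul √3
  filter_upwards [hlim.eventually (gt_mem_nhds hε), eventually_gt_atTop 0] with V hVε hV k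
  rw [dist_comm]
  exact (dist_qV_le hV k).trans_lt hVε

lemma isCompact_cubeI (L : ℝ) : IsCompact (cubeI L) := by
  have hcube : cubeI L = WithLp.ofLp ⁻¹' Set.univ.pi fun _ => Set.Icc (-L) L :=
    Set.ext fun _ => Set.mem_univ_pi.symm
  rw [hcube]
  exact (PiLp.homeomorph 2 fun _ : Fin 3 => ℝ).isCompact_preimage.2
    (isCompact_univ_pi fun _ => isCompact_Icc)

lemma hxL_sub_hxLV (h : EuclideanSpace ℝ (Fin 3) → ℂ) (L V : ℝ)
    (x : EuclideanSpace ℝ (Fin 3)) :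
    hxL h L x - hxLV h L V x
      = (cubeI L).indicator (modulate h x - fun k => modulate h x (qV V k)) :=
  (Set.indicator_sub _ _ _).symm

theorem eventually_toReal_eLpNorm_hxL_sub_hxLV_le {h : EuclideanSpace ℝ (Fin 3) → ℂ}
    (hh : Continuous h) (L : ℝ) {ε : ℝ} (hε : 0 < ε) :
    ∀ᶠ V in atTop, ∀ x,
      (eLpNorm (hxL h L x - hxLV h L V x) 2 volume).toReal ≤ ε * (1 + ‖x‖) := by
  set W := (volume (cubeI L) ^ (1 / (2 : ℝ≥0∞).toReal)).toReal
  have hW : volume (cubeI L) ^ (1 / (2 : ℝ≥0∞).toReal) ≠ ∞ :=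
    ENNReal.rpow_ne_top_of_nonneg (by positivity) (isCompact_cubeI L).measure_lt_top.ne
  have hε' : 0 < ε / (W + 1) := by positivity
  filter_upwards [tendstoUniformly_qV.tendstoUniformlyOn.eventually_dist_modulate_le
    (isCompact_cubeI L) hh hε'] with V hV x
  have hbound := eLpNorm_indicator_sub_le_of_dist_bdd volume (p := 2) ENNReal.ofNat_ne_top
    (isCompact_cubeI L).isClosed.measurableSet (by positivity) (hV x)
  rw [← hxL_sub_hxLV] at hbound
  have hreal := ENNReal.toReal_mono (ENNReal.mul_ne_top ENNReal.ofReal_ne_top hW) hbound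
  rw [ENNReal.toReal_mul, ENNReal.toReal_ofReal (by positivity)] at hreal
  calc (eLpNorm (hxL h L x - hxLV h L V x) 2 volume).toReal
      ≤ ε / (W + 1) * (1 + ‖x‖) * W := hreal
    _ ≤ ε * (1 + ‖x‖) := by
      rw [div_mul_eq_mul_div, div_mul_eq_mul_div, div_le_iff₀ (by positivity)]
      nlinarith [norm_nonneg x]

theorem tendsto_integral_chi_mul_eLpNorm_hxL_sub_hxLV_general
    (h : EuclideanSpace ℝ (Fin 3) → ℂ) (hh : Continuous h) (L : ℝ)
    (χI : EuclideanSpace ℝ (Fin 3) → ℂ)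
    (hχ : Integrable (fun x => (1 + ‖x‖) * ‖χI x‖) volume) :
    Filter.Tendsto
      (fun V : ℝ => ∫ x, ‖χI x‖ *
        (eLpNorm (hxL h L x - hxLV h L V x) 2 volume).toReal)
      Filter.atTop (nhds 0) := by
  refine tendsto_integral_of_forall_eventually_le_mul (fun _ _ => by positivity) hχ
    fun ε hε => ?_
  filter_upwards [eventually_toReal_eLpNorm_hxL_sub_hxLV_le hh L hε] with V hV x
  calc ‖χI x‖ * (eLpNorm (hxL h L x - hxLV h L V x) 2 volume).toReal
      ≤ ‖χI x‖ * (ε * (1 + ‖x‖)) := by gcongr; exact hV x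
    _ = ε * ((1 + ‖x‖) * ‖χI x‖) := by ring

/-- Let `h : ℝ³ → ℂ` be continuous, `L > 0`, and `χ_I : ℝ³ → ℂ` measurable with
`∫ (1 + ‖x‖)·|χ_I(x)| dx < ∞`.  Then
`lim_{V→∞} ∫ |χ_I(x)|·‖(h_x)_L − (h_x)_{L,V}‖₂ dx = 0`. -/
theorem tendsto_integral_chi_mul_eLpNorm_hxL_sub_hxLV
    (h : EuclideanSpace ℝ (Fin 3) → ℂ) (hh : Continuous h) (L : ℝ) (hL : 0 < L)
    (χI : EuclideanSpace ℝ (Fin 3) → ℂ) (hχm : Measurable χI)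
    (hχ : Integrable (fun x => (1 + ‖x‖) * ‖χI x‖) volume) :
    Filter.Tendsto
      (fun V : ℝ => ∫ x, ‖χI x‖ *
        (eLpNorm (hxL h L x - hxLV h L V x) 2 volume).toReal)
      Filter.atTop (nhds 0) :=
  tendsto_integral_chi_mul_eLpNorm_hxL_sub_hxLV_general h hh L χI hχ
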